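/- arXiv:0906.0377 — 4 statements merged into one kernel-verified Lean document; each statement's English description precedes it below -/
import Mathlib

section
/- Let n = a + b, let π be a word consisting of a distinct elements of [n] = {1,...,n} in some order, and let θ be a word consisting of the remaining b elements of [n] in some order. Then the generating function for the major index over all shuffles of θ and π satisfies: Σ_{σ ∈ S(θ,π)} q^{maj(σ)} = [n choose a]_q · q^{maj(θ)+maj(π)}, as an identity of polynomials in q. -/
open Polynomial

/-- The word (1, 2, ..., n) as a list of integers. -/
def W (n : ℕ) : List ℤ := (List.range n).map (fun i => (i : ℤ) + 1)

/-- Descent set of a word: 1-based indices i ∈ {1,...,m-1} with w(i) > w(i+1). -/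
def descSet (w : List ℤ) : Finset ℕ :=
  (Finset.Icc 1 (w.length - 1)).filter (fun i => w.getD (i - 1) 0 > w.getD i 0)

/-- Major index of a word: the sum of its descents. -/
def maj (w : List ℤ) : ℕ := ∑ i ∈ descSet w, i

/-- `dstat w k` is the number of descents of `w` that are ≥ k. -/
def dstat (w : List ℤ) (k : ℕ) : ℕ := ((descSet w).filter (fun i => k ≤ i)).card

/-- Major increment: the change in major index when `r` is inserted into `w`
at (1-based) position `k`. -/
def mi (w : List ℤ) (k : ℕ) (r : ℤ) : ℤ := (maj (w.insertIdx (k - 1) r) : ℤ) - (maj w : ℤ)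

/-- The q-factorial [m]_q! = ∏_{i=1}^m (1 + q + ... + q^{i-1}), as a polynomial in q. -/
noncomputable def qFact (m : ℕ) : Polynomial ℚ :=
  ∏ i ∈ Finset.range m, ∑ j ∈ Finset.range (i + 1), (X : Polynomial ℚ) ^ j

/-- The q-binomial coefficient [n choose a]_q = [n]_q!/([a]_q!·[n−a]_q!). -/
noncomputable def qBinom (n a : ℕ) : Polynomial ℚ := qFact n / (qFact a * qFact (n - a))

/-- The set of all shuffles of two words `θ` and `π` (words containing `θ` and `π`
as complementary subwords). -/
def shuffles (θ π : List ℤ) : Finset (List ℤ) :=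
  (θ ++ π).permutations.toFinset.filter (fun σ => θ.Sublist σ ∧ π.Sublist σ)

/-!
Append to both words a letter `t` distinct from all their letters. Then
`∑_{σ ∈ S(θ,π)} q^maj(σt) = q^(maj(θt) + maj(πt)) · [|θ| + |π| choose |π|]_q`,
a statement symmetric in `θ` and `π` that can be proved by induction: a shuffle of `θ't'` and
`π'p` ends in `t'` or in `p`, removing that letter leaves a shuffle of shorter words, and the
final pair `t't` or `pt` is a descent exactly when `t` is the smaller letter. In each relative
order of `t, t', p` the resulting recurrence is one of the two q-Pascal recurrences. The theorem
is the case of a letter `t` larger than all others, whose appending changes no major index.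
-/

noncomputable def qInt (m : ℕ) : ℚ[X] := ∑ j ∈ Finset.range m, X ^ j

lemma qInt_add (m k : ℕ) : qInt (m + k) = qInt m + X ^ m * qInt k := by
  simp only [qInt, Finset.sum_range_add, Finset.mul_sum, pow_add]

lemma qInt_ne_zero {m : ℕ} (hm : m ≠ 0) : qInt m ≠ 0 := by
  intro h
  have := congrArg (eval 1) h
  simp [qInt, hm] at this

lemma qFact_succ (m : ℕ) : qFact (m + 1) = qFact m * qInt (m + 1) :=
  Finset.prod_range_succ _ _

lemma qFact_ne_zero (m : ℕ) : qFact m ≠ 0 :=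
  Finset.prod_ne_zero_iff.2 fun i _ => qInt_ne_zero i.succ_ne_zero

/-- `gaussBinom a b` is the Gaussian binomial coefficient `[a + b choose a]_q`. -/
noncomputable def gaussBinom : ℕ → ℕ → ℚ[X]
  | 0, _ => 1
  | _ + 1, 0 => 1
  | a + 1, b + 1 => gaussBinom a (b + 1) + X ^ (a + 1) * gaussBinom (a + 1) b

@[simp] lemma gaussBinom_zero_left (b : ℕ) : gaussBinom 0 b = 1 := by
  rw [gaussBinom]

@[simp] lemma gaussBinom_zero_right (a : ℕ) : gaussBinom a 0 = 1 := by
  cases a <;> rw [gaussBinom]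

lemma gaussBinom_succ_succ (a b : ℕ) :
    gaussBinom (a + 1) (b + 1) = gaussBinom a (b + 1) + X ^ (a + 1) * gaussBinom (a + 1) b := by
  rw [gaussBinom]

lemma gaussBinom_mul_qFact (a b : ℕ) :
    gaussBinom a b * (qFact a * qFact b) = qFact (a + b) := by
  induction a generalizing b with
  | zero => simp [qFact]
  | succ a iha =>
    induction b with
    | zero => simp [qFact]
    | succ b ihb =>
      calc gaussBinom (a + 1) (b + 1) * (qFact (a + 1) * qFact (b + 1))
          = gaussBinom a (b + 1) * (qFact a * qFact (b + 1)) * qInt (a + 1)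
            + X ^ (a + 1) * (gaussBinom (a + 1) b * (qFact (a + 1) * qFact b)) * qInt (b + 1) := by
            rw [gaussBinom_succ_succ, qFact_succ a, qFact_succ b]; ring
        _ = qFact (a + b + 1) * (qInt (a + 1) + X ^ (a + 1) * qInt (b + 1)) := by
            rw [iha, ihb, ← add_assoc, add_right_comm a 1 b]; ring
        _ = qFact (a + 1 + (b + 1)) := by
            rw [← qInt_add, show a + 1 + (b + 1) = a + b + 1 + 1 by ring, qFact_succ (a + b + 1)]

lemma gaussBinom_comm (a b : ℕ) : gaussBinom a b = gaussBinom b a :=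
  mul_right_cancel₀ (mul_ne_zero (qFact_ne_zero a) (qFact_ne_zero b)) <| by
    rw [gaussBinom_mul_qFact, mul_comm (qFact a), gaussBinom_mul_qFact, add_comm]

lemma gaussBinom_succ_succ' (a b : ℕ) :
    gaussBinom (a + 1) (b + 1) = gaussBinom (a + 1) b + X ^ (b + 1) * gaussBinom a (b + 1) := by
  rw [gaussBinom_comm, gaussBinom_succ_succ, gaussBinom_comm b, gaussBinom_comm (b + 1)]

lemma qBinom_add (a b : ℕ) : qBinom (a + b) a = gaussBinom a b := by
  rw [qBinom, Nat.add_sub_cancel_left, ← gaussBinom_mul_qFact,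
    mul_div_cancel_right₀ _ (mul_ne_zero (qFact_ne_zero a) (qFact_ne_zero b))]

lemma maj_append_singleton {w : List ℤ} (hw : w ≠ []) (x : ℤ) :
    maj (w ++ [x]) = maj w + if x < w.getLast hw then w.length else 0 := by
  obtain ⟨k, hk⟩ : ∃ k, w.length = k + 1 :=
    Nat.exists_eq_succ_of_ne_zero (mt List.length_eq_zero_iff.1 hw)
  have hlast : w.getD k 0 = w.getLast hw := by
    rw [List.getLast_eq_getElem, List.getD_eq_getElem _ _ (by omega)]
    simp [hk]
  have hinit : (Finset.Icc 1 k).filter (fun i => (w ++ [x]).getD (i - 1) 0 > (w ++ [x]).getD i 0)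
      = descSet w := by
    rw [descSet, hk, Nat.add_sub_cancel]
    refine Finset.filter_congr fun i hi => ?_
    rw [Finset.mem_Icc] at hi
    rw [List.getD_append _ _ _ _ (by omega), List.getD_append _ _ _ _ (by omega)]
  have hset : descSet (w ++ [x]) =
      if x < w.getLast hw then insert (k + 1) (descSet w) else descSet w := by
    rw [descSet, List.length_append, hk, List.length_singleton, Nat.add_sub_cancel,
      ← Finset.insert_Icc_right_eq_Icc_add_one (by omega), Finset.filter_insert, hinit,
      Nat.add_sub_cancel, List.getD_append _ _ _ _ (by omega),
      List.getD_append_right _ _ _ _ (by omega), hk, Nat.sub_self, hlast]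
    rfl
  have hnew : k + 1 ∉ descSet w := fun h => by
    simpa [hk] using (Finset.mem_Icc.1 (Finset.filter_subset _ _ h)).2
  rw [maj, maj, hset]
  split_ifs
  · rw [Finset.sum_insert hnew, hk, add_comm]
  · rw [add_zero]

lemma maj_append_singleton_of_forall_lt {w : List ℤ} {x : ℤ} (h : ∀ z ∈ w, z < x) :
    maj (w ++ [x]) = maj w := by
  rcases eq_or_ne w [] with rfl | hw
  · rfl
  · rw [maj_append_singleton hw, if_neg (h _ (List.getLast_mem hw)).not_gt, add_zero]

lemma mem_shuffles {θ π σ : List ℤ} :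
    σ ∈ shuffles θ π ↔ σ.Perm (θ ++ π) ∧ θ.Sublist σ ∧ π.Sublist σ := by
  simp [shuffles, List.mem_permutations]

lemma shuffles_comm (θ π : List ℤ) : shuffles θ π = shuffles π θ := by
  ext σ
  simp only [mem_shuffles]
  constructor <;> rintro ⟨hperm, h₁, h₂⟩ <;>
    exact ⟨hperm.trans List.perm_append_comm, h₂, h₁⟩

lemma shuffles_nil_right (θ : List ℤ) : shuffles θ [] = {θ} := by
  ext σ
  rw [mem_shuffles, Finset.mem_singleton, List.append_nil]
  refine ⟨fun ⟨hperm, hθ, _⟩ => (hθ.eq_of_length hperm.length_eq.symm).symm, ?_⟩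
  rintro rfl
  exact ⟨.refl _, .refl _, List.nil_sublist _⟩

lemma shuffles_nil_left (π : List ℤ) : shuffles [] π = {π} := by
  rw [shuffles_comm, shuffles_nil_right]

lemma length_of_mem_shuffles {θ π σ : List ℤ} (h : σ ∈ shuffles θ π) :
    σ.length = θ.length + π.length := by
  rw [(mem_shuffles.1 h).1.length_eq, List.length_append]

lemma List.Sublist.of_append_singleton_of_ne {α : Type*} {l₁ l₂ : List α} {a b : α}
    (hab : a ≠ b) (h : (l₁ ++ [a]).Sublist (l₂ ++ [b])) : (l₁ ++ [a]).Sublist l₂ := by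
  rw [← List.reverse_sublist] at h ⊢
  simpa using (by simpa using h : (a :: l₁.reverse).Sublist (b :: l₂.reverse)).of_cons_of_ne hab

lemma append_singleton_mem_shuffles_iff {θ π σ : List ℤ} {x : ℤ} (hx : x ∉ π) :
    σ ++ [x] ∈ shuffles (θ ++ [x]) π ↔ σ ∈ shuffles θ π := by
  have hperm : (θ ++ [x] ++ π).Perm (θ ++ π ++ [x]) := by
    rw [List.append_assoc, List.append_assoc]
    exact List.perm_append_comm.append_left θ
  have hπ : π.Sublist (σ ++ [x]) ↔ π.Sublist σ :=
    ⟨fun h => h.of_sublist_append_left fun _ ha hax => by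
      rw [List.eq_of_mem_singleton hax] at ha; exact hx ha,
      fun h => h.trans (List.sublist_append_left σ [x])⟩
  have hσ : (σ ++ [x]).Perm (θ ++ [x] ++ π) ↔ σ.Perm (θ ++ π) :=
    ⟨fun h => (List.perm_append_right_iff [x]).1 (h.trans hperm),
      fun h => ((List.perm_append_right_iff [x]).2 h).trans hperm.symm⟩
  rw [mem_shuffles, mem_shuffles, List.append_sublist_append_right, hπ, hσ]

lemma mem_shuffles_append_singleton {θ π σ : List ℤ} {x y : ℤ}
    (hnd : (θ ++ [x] ++ (π ++ [y])).Nodup) :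
    σ ∈ shuffles (θ ++ [x]) (π ++ [y]) ↔
      (∃ σ' ∈ shuffles θ (π ++ [y]), σ' ++ [x] = σ) ∨
        ∃ σ' ∈ shuffles (θ ++ [x]) π, σ' ++ [y] = σ := by
  have hx : x ∉ π ++ [y] := by grind
  have hy : y ∉ θ ++ [x] := by grind
  constructor
  · intro hσ
    obtain ⟨hperm, hθ, hπ⟩ := mem_shuffles.1 hσ
    obtain ⟨σ', z, rfl⟩ : ∃ σ' z, σ = σ' ++ [z] := by
      rcases List.eq_nil_or_concat' σ with rfl | h
      · simpa using hperm.length_eq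
      · exact h
    have hz : z = x ∨ z = y := by
      by_contra! hne
      have hzσ' : z ∉ σ' := by grind [hperm.nodup_iff.2 hnd]
      have hθ' := hθ.of_append_singleton_of_ne hne.1.symm
      have hπ' := hπ.of_append_singleton_of_ne hne.2.symm
      have hz : z ∈ θ ++ [x] ++ (π ++ [y]) := hperm.subset (by simp)
      rcases List.mem_append.1 hz with h | h
      · exact hzσ' (hθ'.subset h)
      · exact hzσ' (hπ'.subset h)
    rcases hz with rfl | rfl
    · exact .inl ⟨σ', (append_singleton_mem_shuffles_iff hx).1 hσ, rfl⟩
    · rw [shuffles_comm] at hσ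
      exact .inr ⟨σ', shuffles_comm π _ ▸ (append_singleton_mem_shuffles_iff hy).1 hσ, rfl⟩
  · rintro (⟨σ', hσ', rfl⟩ | ⟨σ', hσ', rfl⟩)
    · exact (append_singleton_mem_shuffles_iff hx).2 hσ'
    · rw [shuffles_comm] at hσ' ⊢
      exact (append_singleton_mem_shuffles_iff hy).2 hσ'

lemma sum_shuffles_append_singleton {M : Type*} [AddCommMonoid M] {θ π : List ℤ} {x y : ℤ}
    (hnd : (θ ++ [x] ++ (π ++ [y])).Nodup) (f : List ℤ → M) :
    ∑ σ ∈ shuffles (θ ++ [x]) (π ++ [y]), f σ =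
      ∑ σ ∈ shuffles θ (π ++ [y]), f (σ ++ [x]) +
        ∑ σ ∈ shuffles (θ ++ [x]) π, f (σ ++ [y]) := by
  have hxy : x ≠ y := by grind
  have hsplit : shuffles (θ ++ [x]) (π ++ [y]) =
      (shuffles θ (π ++ [y])).image (· ++ [x]) ∪
        (shuffles (θ ++ [x]) π).image (· ++ [y]) := by
    ext σ
    simp only [Finset.mem_union, Finset.mem_image, mem_shuffles_append_singleton hnd]
  have hdisj : Disjoint ((shuffles θ (π ++ [y])).image (· ++ [x]))
      ((shuffles (θ ++ [x]) π).image (· ++ [y])) := by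
    simp only [Finset.disjoint_left, Finset.mem_image, not_exists, not_and]
    rintro _ ⟨σ, -, rfl⟩ σ' - h
    exact hxy (List.singleton_inj.1 (List.append_inj' h rfl).2).symm
  rw [hsplit, Finset.sum_union hdisj,
    Finset.sum_image fun _ _ _ _ h => List.append_cancel_right h,
    Finset.sum_image fun _ _ _ _ h => List.append_cancel_right h]

@[simp] lemma maj_singleton (x : ℤ) : maj [x] = 0 := rfl

lemma maj_append_singleton_append_singleton (w : List ℤ) (y x : ℤ) :
    maj (w ++ [y] ++ [x]) = maj (w ++ [y]) + if x < y then w.length + 1 else 0 := by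
  rw [maj_append_singleton (by simp), List.getLast_append_singleton, List.length_append,
    List.length_singleton]

lemma sum_pow_maj_append_singleton_append_singleton {s : Finset (List ℤ)} {m : ℕ}
    (hs : ∀ σ ∈ s, σ.length = m) (y x : ℤ) :
    ∑ σ ∈ s, (X : ℚ[X]) ^ maj (σ ++ [y] ++ [x]) =
      X ^ (if x < y then m + 1 else 0) * ∑ σ ∈ s, X ^ maj (σ ++ [y]) := by
  rw [Finset.mul_sum]
  refine Finset.sum_congr rfl fun σ hσ => ?_
  rw [maj_append_singleton_append_singleton, hs σ hσ, pow_add, mul_comm]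

/- Depending on the relative order of `t, t', p`, this is one of the two q-Pascal recurrences
multiplied by a power of `X`. -/
lemma gaussBinom_shuffle_recurrence (A B : ℕ) {t t' p : ℤ} (ht'p : t' ≠ p) :
    X ^ ((if t < t' then A + B + 1 + 1 else 0) + if t' < p then B + 1 else 0) *
        gaussBinom (B + 1) A +
      X ^ ((if t < p then A + B + 1 + 1 else 0) + if p < t' then A + 1 else 0) *
        gaussBinom B (A + 1) =
      X ^ ((if t < t' then A + 1 else 0) + if t < p then B + 1 else 0) *
        gaussBinom (B + 1) (A + 1) := by
  split_ifs <;>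
    first
    | omega
    | (rw [gaussBinom_succ_succ]; ring1)
    | (rw [gaussBinom_succ_succ']; ring1)

theorem sum_shuffles_pow_maj_append_singleton (θ π : List ℤ) (t : ℤ)
    (hnd : (t :: (θ ++ π)).Nodup) :
    ∑ σ ∈ shuffles θ π, (X : ℚ[X]) ^ maj (σ ++ [t]) =
      X ^ (maj (θ ++ [t]) + maj (π ++ [t])) * gaussBinom π.length θ.length := by
  induction π using List.reverseRecOn generalizing θ t with
  | nil => simp [shuffles_nil_right]
  | append_singleton π' p ihπ =>
    induction θ using List.reverseRecOn generalizing t with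
    | nil => simp [shuffles_nil_left]
    | append_singleton θ' t' ihθ =>
      have hnd₀ : (θ' ++ [t'] ++ (π' ++ [p])).Nodup := (List.nodup_cons.1 hnd).2
      have hnd₁ : (t' :: (θ' ++ (π' ++ [p]))).Nodup :=
        List.nodup_middle.1 (by simpa using hnd₀)
      have hnd₂ : (p :: (θ' ++ [t'] ++ π')).Nodup :=
        (List.perm_append_singleton p _).nodup_iff.1 (by simpa using hnd₀)
      have ht'p : t' ≠ p := fun h => (List.nodup_cons.1 hnd₁).1 (by simp [h])
      have hlen {θ π : List ℤ} (h : θ.length + π.length = θ'.length + π'.length + 1) :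
          ∀ σ ∈ shuffles θ π, σ.length = θ'.length + π'.length + 1 :=
        fun σ hσ => (length_of_mem_shuffles hσ).trans h
      have hlen₁ := hlen (θ := θ') (π := π' ++ [p]) (by simp [Nat.add_assoc])
      have hlen₂ := hlen (θ := θ' ++ [t']) (π := π') (by simp [Nat.add_right_comm])
      rw [sum_shuffles_append_singleton hnd₀,
        sum_pow_maj_append_singleton_append_singleton hlen₁,
        sum_pow_maj_append_singleton_append_singleton hlen₂,
        ihθ t' hnd₁, ihπ (θ' ++ [t']) p hnd₂]
      simp only [maj_append_singleton_append_singleton, List.length_append, List.length_singleton]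
      linear_combination X ^ (maj (θ' ++ [t']) + maj (π' ++ [p])) *
        gaussBinom_shuffle_recurrence θ'.length π'.length (t := t) ht'p

lemma nodup_W (n : ℕ) : (W n).Nodup := by
  -- `W n` elaborates with `List.range n` coerced to `List ℤ` through the list monad.
  simp only [W, List.pure_def, List.bind_eq_flatMap, ← List.map_eq_flatMap, List.map_map]
  exact List.nodup_range.map fun i j h => by simpa using h

lemma List.exists_forall_lt {α : Type*} [LinearOrder α] [NoMaxOrder α] [Nonempty α]
    (l : List α) : ∃ M, ∀ z ∈ l, z < M := by
  obtain ⟨M, hM⟩ := l.toFinset.bddAbove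
  obtain ⟨M', hM'⟩ := exists_gt M
  exact ⟨M', fun z hz => (hM (List.mem_toFinset.2 hz)).trans_lt hM'⟩

/-- Theorem 1.1: the generating function for the major index over all shuffles of
`θ` and `π` is `[n choose a]_q · q^(maj θ + maj π)`. -/
theorem major_index_shuffle (n a b : ℕ) (hn : n = a + b) (θ π : List ℤ)
    (hθ : θ.length = b) (hπ : π.length = a)
    (hperm : (θ ++ π).Perm (W n)) :
    ∑ σ ∈ shuffles θ π, (X : Polynomial ℚ) ^ (maj σ) =
      qBinom n a * (X : Polynomial ℚ) ^ (maj θ + maj π) := by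
  obtain ⟨M, hM⟩ := (θ ++ π).exists_forall_lt
  have hnd : (M :: (θ ++ π)).Nodup :=
    List.nodup_cons.2 ⟨fun h => (hM M h).false, hperm.nodup_iff.2 (nodup_W n)⟩
  have hmaj {w : List ℤ} (hw : w.Subset (θ ++ π)) : maj (w ++ [M]) = maj w :=
    maj_append_singleton_of_forall_lt fun z hz => hM z (hw hz)
  calc ∑ σ ∈ shuffles θ π, (X : ℚ[X]) ^ maj σ
      = ∑ σ ∈ shuffles θ π, X ^ maj (σ ++ [M]) :=
        Finset.sum_congr rfl fun σ hσ => by rw [hmaj (mem_shuffles.1 hσ).1.subset]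
    _ = X ^ (maj (θ ++ [M]) + maj (π ++ [M])) * gaussBinom π.length θ.length :=
        sum_shuffles_pow_maj_append_singleton θ π M hnd
    _ = qBinom n a * X ^ (maj θ + maj π) := by
        rw [hmaj (List.subset_append_left θ π), hmaj (List.subset_append_right θ π), hπ, hθ,
          hn, qBinom_add, mul_comm]
end

section
/- Let σ be a word consisting of the elements 1,...,n−1 in some order (a permutation of [n−1]). Then the major increment upon inserting n at position k is: mi(σ,k,n) = 0 if k = n; mi(σ,k,n) = d_k(σ) + k if k < n and either k = 1 or k−1 is not a descent of σ; and mi(σ,k,n) = d_k(σ) + 1 if k < n and k−1 is a descent of σ. -/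
open Polynomial

/-!
The letter `n` exceeds every letter of `σ`. Inserted at the `0`-based position `p = k - 1`, it
is preceded by a smaller letter, so a descent of `σ` at `p` disappears, and it is followed by a
smaller letter unless it ends the word, which creates the descent `p + 1 = k`. Descents of `σ`
below `p` stay put, while the `d_k(σ)` descents above `p` each move up by one.
-/

namespace List
variable {α : Type*} {l : List α} {x d : α} {i j : ℕ}

theorem getD_insertIdx_of_lt (h : j < i) : (l.insertIdx i x).getD j d = l.getD j d := by
  simp [getD_eq_getElem?_getD, getElem?_insertIdx_of_lt h]

theorem getD_insertIdx_self (h : i ≤ l.length) : (l.insertIdx i x).getD i d = x := by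
  simp [getD_eq_getElem?_getD, getElem?_insertIdx_self, h]

theorem getD_insertIdx_of_gt (h : i < j) : (l.insertIdx i x).getD j d = l.getD (j - 1) d := by
  simp [getD_eq_getElem?_getD, getElem?_insertIdx_of_gt h]

end List

theorem mem_descSet {w : List ℤ} {i : ℕ} :
    i ∈ descSet w ↔ 0 < i ∧ i < w.length ∧ w.getD i 0 < w.getD (i - 1) 0 := by
  simp only [descSet, Finset.mem_filter, Finset.mem_Icc]; omega

theorem descSet_insertIdx_of_forall_lt {σ : List ℤ} {r : ℤ} (hr : ∀ x ∈ σ, x < r) {p : ℕ}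
    (hp : p ≤ σ.length) :
    descSet (σ.insertIdx p r) =
      (descSet σ).filter (· < p) ∪ (if p < σ.length then {p + 1} else ∅) ∪
        ((descSet σ).filter (p < ·)).image (· + 1) := by
  have hlt : ∀ j < σ.length, σ.getD j 0 < r := fun j hj => by
    rw [List.getD_eq_getElem _ _ hj]; exact hr _ (List.getElem_mem hj)
  ext i
  simp only [mem_descSet, Finset.mem_union, Finset.mem_filter, Finset.mem_image,
    List.length_insertIdx_of_le_length hp, apply_ite (i ∈ ·), Finset.mem_singleton,
    Finset.notMem_empty]
  rcases lt_trichotomy i p with hi | rfl | hi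
  · grind [List.getD_insertIdx_of_lt]
  · grind [List.getD_insertIdx_of_lt, List.getD_insertIdx_self]
  obtain rfl | hi' : i = p + 1 ∨ p + 1 < i := by omega
  · grind [List.getD_insertIdx_self, List.getD_insertIdx_of_gt]
  · grind [List.getD_insertIdx_of_gt]

theorem Finset.sum_eq_sum_filter_lt_add_ite_add_sum_filter_gt {α M : Type*} [LinearOrder α]
    [AddCommMonoid M] (s : Finset α) (f : α → M) (a : α) :
    ∑ i ∈ s, f i =
      ∑ i ∈ s.filter (· < a), f i + (if a ∈ s then f a else 0) + ∑ i ∈ s.filter (a < ·), f i := by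
  have hsplit : s.filter (¬ · < a) = s.filter (· = a) ∪ s.filter (a < ·) := by
    ext; simp only [Finset.mem_filter, Finset.mem_union]; grind
  have hdisj : Disjoint (s.filter (· = a)) (s.filter (a < ·)) := by
    rw [Finset.disjoint_filter]; grind
  rw [← Finset.sum_filter_add_sum_filter_not s (· < a), hsplit, Finset.sum_union hdisj,
    Finset.filter_eq', add_assoc]
  split_ifs <;> simp

theorem maj_insertIdx_add_of_forall_lt {σ : List ℤ} {r : ℤ} (hr : ∀ x ∈ σ, x < r) {p : ℕ}
    (hp : p ≤ σ.length) :
    maj (σ.insertIdx p r) + (if p ∈ descSet σ then p else 0) =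
      maj σ + (if p < σ.length then p + 1 else 0) + dstat σ (p + 1) := by
  have hdisj₁ : Disjoint ((descSet σ).filter (· < p)) (if p < σ.length then {p + 1} else ∅) := by
    split_ifs <;> simp
  have hdisj₂ : Disjoint ((descSet σ).filter (· < p) ∪ (if p < σ.length then {p + 1} else ∅))
      (((descSet σ).filter (p < ·)).image (· + 1)) := by
    rw [Finset.disjoint_left]
    split_ifs <;> simp only [Finset.mem_union, Finset.mem_filter, Finset.mem_singleton,
      Finset.notMem_empty, Finset.mem_image] <;> grind
  rw [maj, maj, descSet_insertIdx_of_forall_lt hr hp, Finset.sum_union hdisj₂,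
    Finset.sum_union hdisj₁, Finset.sum_image (by simp), Finset.sum_add_distrib,
    Finset.sum_eq_sum_filter_lt_add_ite_add_sum_filter_gt (descSet σ) _ p, dstat]
  simp only [Finset.sum_const, smul_eq_mul, mul_one, Nat.add_one_le_iff]
  split_ifs <;> simp only [Finset.sum_singleton, Finset.sum_empty] <;> omega

theorem length_W (m : ℕ) : (W m).length = m := by
  simp [W]

theorem le_of_mem_W {m : ℕ} {x : ℤ} (hx : x ∈ W m) : x ≤ m := by
  obtain ⟨a, ha, rfl⟩ : ∃ a < m, (a : ℤ) + 1 = x := by simpa [W] using hx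
  omega

theorem dstat_eq_zero_of_length_le {w : List ℤ} {k : ℕ} (hk : w.length ≤ k) : dstat w k = 0 := by
  rw [dstat, Finset.card_eq_zero, Finset.filter_eq_empty_iff]
  exact fun i hi => by have := (mem_descSet.1 hi).2.1; omega

theorem mi_insert_max_general (n : ℕ) (σ : List ℤ) (hσ : σ.Perm (W (n - 1)))
    (k : ℕ) (hk1 : 1 ≤ k) (hkn : k ≤ n) :
    (k = n → mi σ k (n : ℤ) = 0) ∧
    (k < n → (k = 1 ∨ (k - 1) ∉ descSet σ) → mi σ k (n : ℤ) = (dstat σ k : ℤ) + k) ∧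
    (k < n → (k - 1) ∈ descSet σ → mi σ k (n : ℤ) = (dstat σ k : ℤ) + 1) := by
  obtain ⟨p, rfl⟩ : ∃ p, k = p + 1 := ⟨k - 1, by omega⟩
  have hlen : σ.length = n - 1 := by rw [hσ.length_eq, length_W]
  have hr : ∀ x ∈ σ, x < (n : ℤ) := fun x hx => by
    have := le_of_mem_W (hσ.mem_iff.1 hx); omega
  have key := maj_insertIdx_add_of_forall_lt hr (p := p) (by omega)
  have hbounds : p ∈ descSet σ → 0 < p ∧ p < σ.length := fun h =>
    (mem_descSet.1 h).imp_right And.left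
  simp only [mi, Nat.add_sub_cancel]
  refine ⟨fun hpn => ?_, fun hpn hasc => ?_, fun hpn hdes => ?_⟩
  · have hp : p ∉ descSet σ := fun h => by have := hbounds h; omega
    rw [dstat_eq_zero_of_length_le (by omega), if_neg hp, if_neg (by omega)] at key
    omega
  · have hp : p ∉ descSet σ := hasc.elim (fun h hmem => by have := hbounds hmem; omega) id
    rw [if_neg hp, if_pos (by omega)] at key
    omega
  · rw [if_pos hdes, if_pos (by omega)] at key
    omega

/-- Formula (*): for σ a permutation of [n-1], the major increment upon inserting n
at position k is 0 if k = n; dₖ(σ) + k if k = 1 or k-1 is an ascent; and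
dₖ(σ) + 1 if k-1 is a descent. -/
theorem mi_insert_max (n : ℕ) (σ : List ℤ) (hσ : σ.Perm (W (n - 1))) (hn : 1 ≤ n)
    (k : ℕ) (hk1 : 1 ≤ k) (hkn : k ≤ n) :
    (k = n → mi σ k (n : ℤ) = 0) ∧
    (k < n → (k = 1 ∨ (k - 1) ∉ descSet σ) → mi σ k (n : ℤ) = (dstat σ k : ℤ) + k) ∧
    (k < n → (k - 1) ∈ descSet σ → mi σ k (n : ℤ) = (dstat σ k : ℤ) + 1) :=
  mi_insert_max_general n σ hσ k hk1 hkn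
end

section
/- Let n = a + b, let θ be a word of length b and π a word of length a on complementary subsets of [n], and let σ ∈ S(θ,π). With the insertion construction, set m_i = maj(σ_i) − maj(σ_{i+1}) for i = 1,...,a. Then for every i ∈ {1,...,a}, the value t_i = m_i − d_i(π) satisfies 0 ≤ t_i ≤ b. -/
open Polynomial

/-- σ is a shuffle of θ and π: it contains θ and π as complementary subwords. -/
def IsShuffle (θ π σ : List ℤ) : Prop := θ.Sublist σ ∧ π.Sublist σ ∧ σ.Perm (θ ++ π)

/-- Insertion construction: `subw θ π σ i` is the subword σᵢ of σ consisting of the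
letters of θ together with π(i),...,π(a) (indices 1-based); `subw θ π σ (a+1) = θ`. -/
def subw (θ π σ : List ℤ) (i : ℕ) : List ℤ :=
  σ.filter (fun x => decide (x ∈ θ ∨ x ∈ π.drop (i - 1)))

/-- `kpos θ π σ i` is the (1-based) position kᵢ at which π(i) is inserted into σᵢ₊₁
to form σᵢ, i.e. the position of the letter π(i) in σᵢ. -/
def kpos (θ π σ : List ℤ) (i : ℕ) : ℕ :=
  (subw θ π σ i).idxOf (π.getD (i - 1) 0) + 1

/-- `mstat θ π σ i` is mᵢ = maj(σᵢ) - maj(σᵢ₊₁), the increase in major index induced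
by the insertion of π(i). -/
def mstat (θ π σ : List ℤ) (i : ℕ) : ℤ :=
  (maj (subw θ π σ i) : ℤ) - (maj (subw θ π σ (i + 1)) : ℤ)

/-! The word σᵢ arises from σᵢ₊₁ = A ++ B by inserting c = π(i), giving A ++ c :: B. Since
maj w = Σₖ des(w.drop k), where des counts descents, the insertion adds the new term
des(c :: B), leaves the terms beyond the insertion point unchanged and raises each of the |A|
terms before it by 0 or 1. As π(i+1)⋯π(a) is a subword of B, each of its |B| − (a − i) extra
letters adds 0 or 1 to des(c :: π(i+1)⋯π(a)) = dᵢ(π), so tᵢ lies between 0 and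
|A| + |B| − (a − i) ≤ b. -/

section descCount

variable {α : Type*} [LinearOrder α]

def descCount : List α → ℕ
  | x :: y :: t => (if y < x then 1 else 0) + descCount (y :: t)
  | _ => 0

@[simp] lemma descCount_nil : descCount ([] : List α) = 0 := rfl

@[simp] lemma descCount_singleton (x : α) : descCount [x] = 0 := rfl

@[simp] lemma descCount_cons_cons (x y : α) (t : List α) :
    descCount (x :: y :: t) = (if y < x then 1 else 0) + descCount (y :: t) := rfl

lemma descCount_le_descCount_cons (x : α) (u : List α) : descCount u ≤ descCount (x :: u) := by
  cases u <;> simp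

lemma descCount_cons_le_succ (x : α) (u : List α) : descCount (x :: u) ≤ descCount u + 1 := by
  cases u <;> simp only [descCount_cons_cons, descCount_singleton] <;> (try split_ifs) <;> omega

lemma descCount_cons_le_cons_cons (x y : α) (u : List α) :
    descCount (x :: u) ≤ descCount (x :: y :: u) := by
  cases u with
  | nil => simp
  | cons z t =>
    simp only [descCount_cons_cons]
    split_ifs <;> first | omega | (exfalso; order)

lemma descCount_cons_cons_le_succ (x y : α) (u : List α) :
    descCount (x :: y :: u) ≤ descCount (x :: u) + 1 := by
  cases u <;> simp only [descCount_cons_cons, descCount_singleton] <;> split_ifs <;>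
    first | omega | (exfalso; order)

lemma descCount_le_descCount_append_cons (r : α) (u₁ u₂ : List α) :
    descCount (u₁ ++ u₂) ≤ descCount (u₁ ++ r :: u₂) ∧
      descCount (u₁ ++ r :: u₂) ≤ descCount (u₁ ++ u₂) + 1 := by
  induction u₁ with
  | nil => exact ⟨descCount_le_descCount_cons r u₂, descCount_cons_le_succ r u₂⟩
  | cons x u₁ ih =>
    cases u₁ with
    | nil => exact ⟨descCount_cons_le_cons_cons x r u₂, descCount_cons_cons_le_succ x r u₂⟩
    | cons y u₁ =>
      simp only [List.cons_append, descCount_cons_cons] at ih ⊢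
      omega

lemma descCount_cons_le_of_sublist {p u : List α} (h : p.Sublist u) (x : α) :
    descCount (x :: p) ≤ descCount (x :: u) ∧
      descCount (x :: u) + p.length ≤ descCount (x :: p) + u.length := by
  induction h generalizing x with
  | slnil => simp
  | @cons l₁ l₂ a _ ih =>
    have := descCount_cons_le_cons_cons x a l₂
    have := descCount_cons_cons_le_succ x a l₂
    have := ih x
    simp only [List.length_cons]
    omega
  | cons_cons a _ ih =>
    simp only [descCount_cons_cons, List.length_cons]
    have := ih a
    omega

end descCount

lemma List.sublist_of_cons_sublist_append_cons {α : Type*} {c : α} {p A B : List α}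
    (h : (c :: p).Sublist (A ++ c :: B)) (hc : c ∉ A) : p.Sublist B := by
  obtain ⟨l₁, l₂, hl, h₁, h₂⟩ := List.sublist_append_iff.mp h
  cases l₁ with
  | nil =>
    rw [List.nil_append] at hl
    subst hl
    exact List.cons_sublist_cons.mp h₂
  | cons y l₁ =>
    rw [List.cons_append, List.cons.injEq] at hl
    exact absurd (hl.1 ▸ h₁.subset List.mem_cons_self) hc

lemma descSet_cons_filter_two_le (x : ℤ) (w : List ℤ) :
    (descSet (x :: w)).filter (2 ≤ ·) = (descSet w).map (addRightEmbedding 1) := by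
  ext i
  rcases i with _ | _ | j <;> simp [descSet]
  omega

lemma dstat_cons_add_two (x : ℤ) (w : List ℤ) (k : ℕ) :
    dstat (x :: w) (k + 2) = dstat w (k + 1) := by
  have : (descSet (x :: w)).filter (k + 2 ≤ ·)
      = ((descSet (x :: w)).filter (2 ≤ ·)).filter (k + 2 ≤ ·) := by
    rw [Finset.filter_filter]
    exact Finset.filter_congr fun i _ => by omega
  rw [dstat, this, descSet_cons_filter_two_le, Finset.filter_map, Finset.card_map, dstat]
  congr 1
  exact Finset.filter_congr fun i _ => by simp

lemma dstat_eq_ite_add (w : List ℤ) (k : ℕ) :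
    dstat w k = (if k ∈ descSet w then 1 else 0) + dstat w (k + 1) := by
  simp only [dstat, Finset.card_filter]
  rw [← Finset.sum_ite_eq' (descSet w) k (fun _ => 1), ← Finset.sum_add_distrib]
  exact Finset.sum_congr rfl fun i _ => by split_ifs <;> omega

lemma dstat_one (w : List ℤ) : dstat w 1 = descCount w := by
  match w with
  | [] => rfl
  | [x] => rfl
  | x :: y :: t =>
    rw [dstat_eq_ite_add, dstat_cons_add_two x (y :: t) 0, dstat_one (y :: t), descCount_cons_cons]
    simp [descSet]

lemma dstat_succ_eq_descCount_drop (w : List ℤ) (k : ℕ) :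
    dstat w (k + 1) = descCount (w.drop k) := by
  induction w generalizing k with
  | nil => simp [dstat, descSet]
  | cons x t ih =>
    cases k with
    | zero => exact dstat_one _
    | succ k => rw [dstat_cons_add_two, ih, List.drop_succ_cons]

/-- Each descent `i` is counted once for every `k < i`. -/
lemma maj_eq_sum_dstat (w : List ℤ) :
    maj w = ∑ k ∈ Finset.range w.length, dstat w (k + 1) := by
  simp only [maj, dstat, Finset.card_filter]
  rw [Finset.sum_comm]
  refine Finset.sum_congr rfl fun i hi => ?_
  have hiw : i < w.length := by
    simp only [descSet, Finset.mem_filter, Finset.mem_Icc] at hi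
    omega
  rw [Finset.sum_boole, Nat.cast_id]
  conv_lhs => rw [← Finset.card_range i]
  congr 1
  ext k
  simp only [Finset.mem_range, Finset.mem_filter]
  omega

lemma maj_cons (x : ℤ) (w : List ℤ) : maj (x :: w) = maj w + descCount (x :: w) := by
  rw [maj_eq_sum_dstat, maj_eq_sum_dstat, List.length_cons, Finset.sum_range_succ', dstat_one]
  simp only [dstat_cons_add_two]

lemma maj_append_cons_bounds (A B : List ℤ) (c : ℤ) :
    maj (A ++ B) + descCount (c :: B) ≤ maj (A ++ c :: B) ∧
      maj (A ++ c :: B) ≤ maj (A ++ B) + descCount (c :: B) + A.length := by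
  induction A with
  | nil => simp [maj_cons]
  | cons x A ih =>
    have := descCount_le_descCount_append_cons c (x :: A) B
    simp only [List.cons_append, maj_cons, List.length_cons] at this ⊢
    omega

lemma maj_append_cons_bounds_of_sublist (A : List ℤ) {p B : List ℤ} (c : ℤ) (hp : p.Sublist B) :
    maj (A ++ B) + descCount (c :: p) ≤ maj (A ++ c :: B) ∧
      maj (A ++ c :: B) + p.length ≤ maj (A ++ B) + descCount (c :: p) + A.length + B.length := by
  have := maj_append_cons_bounds A B c
  have := descCount_cons_le_of_sublist hp c
  omega

section subw

variable {θ π σ : List ℤ}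

lemma drop_sublist_subw (hπσ : π.Sublist σ) (j : ℕ) : (π.drop j).Sublist (subw θ π σ (j + 1)) := by
  have h := ((π.drop_sublist j).trans hπσ).filter
    (fun x => decide (x ∈ θ ∨ x ∈ π.drop j))
  rwa [List.filter_eq_self.mpr fun x hx => by simp [hx]] at h

lemma length_subw_le (hσ : σ.Nodup) (j : ℕ) :
    (subw θ π σ (j + 1)).length ≤ θ.length + (π.length - j) := by
  have hsub : subw θ π σ (j + 1) ⊆ θ ++ π.drop j := fun x hx => by
    simpa [subw] using (List.mem_filter.mp hx).2
  exact ((hσ.filter _).subperm hsub).length_le.trans (by simp)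

lemma subw_add_two (hσ : σ.Nodup) (hθπ : (θ ++ π).Nodup) {j : ℕ} (hj : j < π.length) :
    subw θ π σ (j + 2) = (subw θ π σ (j + 1)).erase π[j] := by
  obtain ⟨-, hπ, hdisj⟩ := List.nodup_append.mp hθπ
  have hdrop := List.drop_eq_getElem_cons hj
  have hcθ : π[j] ∉ θ := fun h => hdisj _ h _ (List.getElem_mem hj) rfl
  have hcπ : π[j] ∉ π.drop (j + 1) := (List.nodup_cons.mp (hdrop ▸ hπ.sublist (π.drop_sublist j))).1
  rw [subw, subw, (hσ.filter _).erase_eq_filter, List.filter_filter]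
  refine List.filter_congr fun x _ => ?_
  simp only [show j + 2 - 1 = j + 1 by omega, Nat.add_sub_cancel, hdrop, List.mem_cons]
  by_cases hx : x = π[j]
  · simp [hx, hcθ, hcπ]
  · simp [hx]

end subw

theorem t_bounds_general (n a b : ℕ) (θ π : List ℤ)
    (hθ : θ.length = b) (hπ : π.length = a) (hperm : (θ ++ π).Perm (W n))
    (σ : List ℤ) (hσ : IsShuffle θ π σ) (i : ℕ) (hi1 : 1 ≤ i) (hia : i ≤ a) :
    0 ≤ mstat θ π σ i - (dstat π i : ℤ) ∧ mstat θ π σ i - (dstat π i : ℤ) ≤ (b : ℤ) := by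
  obtain ⟨-, hπσ, hσθπ⟩ := hσ
  obtain ⟨j, rfl⟩ : ∃ j, i = j + 1 := ⟨i - 1, by omega⟩
  have hj : j < π.length := by omega
  have hθπ : (θ ++ π).Nodup := hperm.nodup_iff.mpr (nodup_W n)
  have hσnd : σ.Nodup := hσθπ.nodup_iff.mpr hθπ
  have hdrop := List.drop_eq_getElem_cons hj
  have hmem : π[j] ∈ subw θ π σ (j + 1) :=
    (drop_sublist_subw hπσ j).subset (hdrop ▸ List.mem_cons_self)
  obtain ⟨A, B, hcur⟩ := List.append_of_mem hmem
  have hcA : π[j] ∉ A := by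
    have hnd : (subw θ π σ (j + 1)).Nodup := hσnd.filter _
    rw [hcur, List.nodup_middle, List.nodup_cons, List.mem_append, not_or] at hnd
    exact hnd.1.1
  have hnext : subw θ π σ (j + 2) = A ++ B := by
    rw [subw_add_two hσnd hθπ hj, hcur, List.erase_append_right _ hcA, List.erase_cons_head]
  have hsub : (π.drop (j + 1)).Sublist B := by
    have h := drop_sublist_subw (θ := θ) hπσ j
    rw [hcur, hdrop] at h
    exact List.sublist_of_cons_sublist_append_cons h hcA
  have hlen := length_subw_le (θ := θ) (π := π) hσnd j
  have hbounds := maj_append_cons_bounds_of_sublist A π[j] hsub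
  rw [hcur] at hlen
  rw [mstat, hcur, hnext, dstat_succ_eq_descCount_drop, hdrop]
  simp only [List.length_append, List.length_cons, List.length_drop] at hlen hbounds
  omega

/-- Corollary to Proposition 4.1: for every i ∈ {1,...,a}, tᵢ = mᵢ - dᵢ(π)
satisfies 0 ≤ tᵢ ≤ b. -/
theorem t_bounds (n a b : ℕ) (hn : n = a + b) (θ π : List ℤ)
    (hθ : θ.length = b) (hπ : π.length = a) (hperm : (θ ++ π).Perm (W n))
    (σ : List ℤ) (hσ : IsShuffle θ π σ) (i : ℕ) (hi1 : 1 ≤ i) (hia : i ≤ a) :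
    0 ≤ mstat θ π σ i - (dstat π i : ℤ) ∧ mstat θ π σ i - (dstat π i : ℤ) ≤ (b : ℤ) :=
  t_bounds_general n a b θ π hθ hπ hperm σ hσ i hi1 hia
end

section
/- (MacMahon) Let T be the multiset {1^{a_1}, 2^{a_2}, ..., k^{a_k}} with a_1 + ... + a_k = n, and let P(T) be the set of all words that are permutations of T. Then Σ_{σ ∈ P(T)} q^{maj(σ)} = [n; a_1, ..., a_k]_q, the q-multinomial coefficient, as an identity of polynomials in q. -/
open Polynomial

/-!
Stanley's P-partitions. Call a list `t` of naturals compatible with a word `σ` if it is weakly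
decreasing and strictly decreasing across each descent of `σ`. Subtracting from `t i` the number
of descents of `σ` after position `i` is a bijection onto weakly decreasing lists, so the
compatible lists of `σ` have generating function `q ^ maj σ / ((1 - q) ⋯ (1 - q ^ n))`.
Summing over the rearrangements `σ` of `T`, a pair `(σ, t)` is the same as a list of pairs
`(letter, value)` sorted by decreasing value and then increasing letter, hence the same as a
multiset of such pairs; splitting it by letters, the sum is `∏ j, 1 / ((1 - q) ⋯ (1 - q ^ a j))`.
Comparing the two expressions gives the q-multinomial coefficient.
-/

namespace MacMahon

open Finset

section PairwiseLists

variable {α : Type*} {r : α → α → Prop}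

theorem pairwise_iff_getD_succ [IsTrans α r] {l : List α} (d : α) :
    l.Pairwise r ↔ ∀ i, i + 1 < l.length → r (l.getD i d) (l.getD (i + 1) d) := by
  rw [← List.isChain_iff_pairwise, List.isChain_iff_getElem]
  refine forall_congr' fun i => ⟨fun h hi => ?_, fun h hi => ?_⟩
  · rw [List.getD_eq_getElem _ _ (by omega), List.getD_eq_getElem _ _ hi]
    exact h hi
  · have := h hi
    rwa [List.getD_eq_getElem _ _ (by omega), List.getD_eq_getElem _ _ hi] at this

theorem filter_perm_of_perm_append {l l₁ l₂ : List α} (p : α → Bool) (h : l.Perm (l₁ ++ l₂))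
    (hp₁ : ∀ x ∈ l₁, p x) (hp₂ : ∀ x ∈ l₂, ¬p x) : (l.filter p).Perm l₁ := by
  have := h.filter p
  rwa [List.filter_append, List.filter_eq_self.2 hp₁, List.filter_eq_nil_iff.2 hp₂,
    List.append_nil] at this

theorem filter_eq_of_perm_append [Std.Antisymm r] {l l₁ l₂ : List α} (p : α → Bool)
    (hl : l.Pairwise r) (h₁ : l₁.Pairwise r) (h : l.Perm (l₁ ++ l₂))
    (hp₁ : ∀ x ∈ l₁, p x) (hp₂ : ∀ x ∈ l₂, ¬p x) : l.filter p = l₁ :=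
  List.Perm.eq_of_pairwise' (hl.filter p) h₁ (filter_perm_of_perm_append p h hp₁ hp₂)

theorem sort_eq_of_perm [DecidableRel r] [IsTrans α r] [Std.Antisymm r] [Std.Total r]
    {l l' : List α} (hl : l.Pairwise r) (h : l'.Perm l) : Multiset.sort (l' : Multiset α) r = l :=
  List.Perm.eq_of_pairwise' (Multiset.pairwise_sort _ r) hl
    ((Multiset.coe_eq_coe.1 (Multiset.sort_eq _ r)).trans h)

end PairwiseLists

theorem mk_eq_X_pow_mul_mk {R : Type*} [Semiring R] {f g : ℕ → R} {d : ℕ}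
    (hf : ∀ M < d, f M = 0) (hfg : ∀ M, f (M + d) = g M) :
    PowerSeries.mk f = PowerSeries.X ^ d * PowerSeries.mk g := by
  ext M
  rw [PowerSeries.coeff_X_pow_mul', PowerSeries.coeff_mk]
  split_ifs with h
  · obtain ⟨K, rfl⟩ := Nat.exists_eq_add_of_le' h
    simp [hfg]
  · exact hf M (by omega)

def weakCompositions (m M : ℕ) : Finset (List ℕ) :=
  (Finset.Nat.antidiagonalTuple m M).image List.ofFn

theorem mem_weakCompositions {m M : ℕ} {l : List ℕ} :
    l ∈ weakCompositions m M ↔ l.length = m ∧ l.sum = M := by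
  constructor
  · intro h
    obtain ⟨f, hf, rfl⟩ := mem_image.1 h
    rw [Finset.Nat.mem_antidiagonalTuple] at hf
    simp [List.sum_ofFn, hf]
  · rintro ⟨rfl, rfl⟩
    refine mem_image.2 ⟨l.get, ?_, List.ofFn_get l⟩
    rw [Finset.Nat.mem_antidiagonalTuple, ← List.sum_ofFn, List.ofFn_get]

/-- Partitions of `M` into at most `m` parts, padded with zeros. -/
def weakPartitions (m M : ℕ) : Finset (List ℕ) :=
  (weakCompositions m M).filter (List.Pairwise (· ≥ ·))

theorem mem_weakPartitions {m M : ℕ} {l : List ℕ} :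
    l ∈ weakPartitions m M ↔ l.length = m ∧ l.sum = M ∧ l.Pairwise (· ≥ ·) := by
  simp [weakPartitions, mem_weakCompositions, and_assoc]

noncomputable def weakPartitionGF (m : ℕ) : PowerSeries ℚ :=
  PowerSeries.mk fun M => (#(weakPartitions m M) : ℚ)

theorem weakPartitionGF_zero : weakPartitionGF 0 = 1 := by
  ext M
  rcases M with _ | M <;> simp [weakPartitionGF, weakPartitions, weakCompositions, filter_singleton]

theorem filter_zero_mem_weakPartitions (m M : ℕ) :
    (weakPartitions (m + 1) M).filter (0 ∈ ·) = (weakPartitions m M).image (· ++ [0]) := by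
  ext l
  simp only [mem_filter, mem_image, mem_weakPartitions]
  constructor
  · rintro ⟨⟨hlen, hsum, hl⟩, h0⟩
    have hne : l ≠ [] := List.ne_nil_of_length_pos (by omega)
    have hsplit := List.dropLast_append_getLast hne
    rw [← hsplit, List.pairwise_append] at hl
    have hlast : l.getLast hne = 0 := by
      rw [← hsplit, List.mem_append, List.mem_singleton] at h0
      rcases h0 with h0 | h0
      · exact Nat.eq_zero_of_le_zero (hl.2.2 0 h0 _ (List.mem_singleton_self _))
      · exact h0.symm
    refine ⟨l.dropLast, ⟨by simp [hlen], ?_, hl.1⟩, by rw [← hlast, hsplit]⟩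
    rw [← hsplit, hlast] at hsum
    simpa using hsum
  · rintro ⟨u, ⟨rfl, rfl, hu⟩, rfl⟩
    simp [List.pairwise_append, hu]

theorem filter_zero_notMem_weakPartitions (m M : ℕ) :
    (weakPartitions (m + 1) (M + (m + 1))).filter (0 ∉ ·)
      = (weakPartitions (m + 1) M).image (List.map (· + 1)) := by
  have hsum_succ (u : List ℕ) : (u.map (· + 1)).sum = u.sum + u.length := by
    simp [List.sum_map_add]
  ext l
  simp only [mem_filter, mem_image, mem_weakPartitions]
  constructor
  · rintro ⟨⟨hlen, hsum, hl⟩, h0⟩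
    have hpos : ∀ x ∈ l, 1 ≤ x := fun x hx => Nat.one_le_iff_ne_zero.2 fun h => h0 (h ▸ hx)
    have hl' : (l.map (· - 1)).map (· + 1) = l := by
      rw [List.map_map]
      exact (List.map_congr_left fun x hx => by have := hpos x hx; simp; omega).trans
        (List.map_id l)
    refine ⟨l.map (· - 1), ⟨by simp [hlen], ?_, ?_⟩, hl'⟩
    · rw [← hl', hsum_succ] at hsum
      simp only [List.length_map, hlen] at hsum
      omega
    · exact hl.map _ fun a b h => Nat.sub_le_sub_right h 1
  · rintro ⟨u, ⟨hlen, rfl, hu⟩, rfl⟩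
    refine ⟨⟨by simp [hlen], by rw [hsum_succ, hlen], hu.map _ fun a b h => by omega⟩, ?_⟩
    simp

theorem filter_zero_notMem_weakPartitions_of_lt {m M : ℕ} (h : M < m + 1) :
    (weakPartitions (m + 1) M).filter (0 ∉ ·) = ∅ := by
  refine filter_eq_empty_iff.2 fun l hl h0 => ?_
  obtain ⟨hlen, hsum, -⟩ := mem_weakPartitions.1 hl
  have := l.length_le_sum_of_one_le fun x hx => Nat.one_le_iff_ne_zero.2 fun h => h0 (h ▸ hx)
  omega

theorem weakPartitionGF_succ (m : ℕ) :
    weakPartitionGF (m + 1)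
      = weakPartitionGF m + PowerSeries.X ^ (m + 1) * weakPartitionGF (m + 1) := by
  have hpos : PowerSeries.mk (fun M => (#((weakPartitions (m + 1) M).filter (0 ∉ ·)) : ℚ))
      = PowerSeries.X ^ (m + 1) * weakPartitionGF (m + 1) := by
    refine mk_eq_X_pow_mul_mk (fun M hM => ?_) fun M => ?_
    · simp [filter_zero_notMem_weakPartitions_of_lt hM]
    · rw [filter_zero_notMem_weakPartitions, card_image_of_injective _ (List.map_injective_iff.2
        (add_left_injective 1))]
  rw [← hpos]
  ext M
  simp only [map_add, weakPartitionGF, PowerSeries.coeff_mk]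
  rw [← card_filter_add_card_filter_not (0 ∈ ·), filter_zero_mem_weakPartitions,
    card_image_of_injective _ (List.append_left_injective [0])]
  push_cast
  rfl

theorem one_sub_X_pow_mul_qFact_succ (m : ℕ) :
    (1 - X) ^ (m + 1) * qFact (m + 1) = (1 - X) ^ m * qFact m * (1 - X ^ (m + 1) : ℚ[X]) := by
  rw [qFact, prod_range_succ, ← mul_neg_geom_sum, ← qFact]
  ring

theorem weakPartitionGF_mul_eq_one (m : ℕ) :
    weakPartitionGF m * ((1 - X) ^ m * qFact m : ℚ[X]) = 1 := by
  induction m with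
  | zero => simp [weakPartitionGF_zero, qFact]
  | succ m ih =>
    rw [one_sub_X_pow_mul_qFact_succ]
    push_cast at ih ⊢
    linear_combination
      ((1 - PowerSeries.X) ^ m * (qFact m : PowerSeries ℚ)) * weakPartitionGF_succ m + ih

theorem mem_descSet_succ {σ : List ℤ} {i : ℕ} (h : i + 1 < σ.length) :
    i + 1 ∈ descSet σ ↔ σ.getD (i + 1) 0 < σ.getD i 0 := by
  simp only [descSet, mem_filter, mem_Icc, Nat.add_sub_cancel]
  omega

theorem le_length_of_mem_descSet {σ : List ℤ} {d : ℕ} (h : d ∈ descSet σ) : d + 1 ≤ σ.length := by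
  simp only [descSet, mem_filter, mem_Icc] at h
  omega

theorem dstat_eq_zero {σ : List ℤ} {j : ℕ} (h : σ.length ≤ j) : dstat σ j = 0 :=
  card_eq_zero.2 <| filter_eq_empty_iff.2 fun d hd => by
    have := le_length_of_mem_descSet hd
    omega

theorem dstat_eq_dstat_succ_add (σ : List ℤ) (i : ℕ) :
    dstat σ i = dstat σ (i + 1) + if i ∈ descSet σ then 1 else 0 := by
  have hsplit : (descSet σ).filter (i ≤ ·)
      = (descSet σ).filter (i + 1 ≤ ·) ∪ (descSet σ).filter (· = i) := by
    rw [← filter_or]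
    exact filter_congr fun d _ => by omega
  rw [dstat, dstat, hsplit, card_union_of_disjoint (disjoint_filter.2 fun d _ h => by omega),
    filter_eq']
  split_ifs <;> simp

theorem sum_dstat (σ : List ℤ) : ∑ i ∈ range σ.length, dstat σ (i + 1) = maj σ := by
  simp only [dstat, card_filter]
  rw [sum_comm]
  refine sum_congr rfl fun d hd => ?_
  have := le_length_of_mem_descSet hd
  rw [← card_filter, show (range σ.length).filter (· + 1 ≤ d) = range d by ext; simp; omega,
    card_range]

def LabelLE (p q : ℤ × ℕ) : Prop := q.2 < p.2 ∨ q.2 = p.2 ∧ p.1 ≤ q.1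

instance : DecidableRel LabelLE := fun _ _ => by unfold LabelLE; infer_instance

instance : IsTrans (ℤ × ℕ) LabelLE := ⟨fun _ _ _ => by unfold LabelLE; omega⟩

instance : Std.Antisymm LabelLE :=
  ⟨fun _ _ h h' => by unfold LabelLE at h h'; exact Prod.ext (by omega) (by omega)⟩

instance : Std.Total LabelLE := ⟨fun _ _ => by unfold LabelLE; omega⟩

/-- The `σ`-compatible lists of weight `M`: weakly decreasing, and strictly decreasing across
each descent of `σ`. -/
def compatibleTuples (σ : List ℤ) (M : ℕ) : Finset (List ℕ) :=
  (weakCompositions σ.length M).filter fun t => (σ.zip t).Pairwise LabelLE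

theorem mem_compatibleTuples {σ : List ℤ} {M : ℕ} {t : List ℕ} :
    t ∈ compatibleTuples σ M ↔
      t.length = σ.length ∧ t.sum = M ∧ (σ.zip t).Pairwise LabelLE := by
  simp [compatibleTuples, mem_weakCompositions, and_assoc]

theorem pairwise_zip_labelLE_iff {σ : List ℤ} {t : List ℕ} (h : t.length = σ.length) :
    (σ.zip t).Pairwise LabelLE ↔ ∀ i, i + 1 < σ.length →
      t.getD (i + 1) 0 + (if i + 1 ∈ descSet σ then 1 else 0) ≤ t.getD i 0 := by
  have getD_zip {j : ℕ} (hj : j < σ.length) :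
      (σ.zip t).getD j (0, 0) = (σ.getD j 0, t.getD j 0) := by
    rw [List.getD_eq_getElem _ _ (by simp; omega), List.getElem_zip,
      List.getD_eq_getElem _ _ hj, List.getD_eq_getElem _ _ (by omega)]
  rw [pairwise_iff_getD_succ (0, 0), List.length_zip, h, min_self]
  refine forall₂_congr fun i hi => ?_
  rw [getD_zip (by omega), getD_zip hi, LabelLE]
  split_ifs with hd <;> rw [mem_descSet_succ hi] at hd <;> omega

theorem dstat_le_getD {σ : List ℤ} {t : List ℕ} (ht : t.length = σ.length)
    (hcompat : (σ.zip t).Pairwise LabelLE) {i : ℕ} (hi : i < σ.length) :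
    dstat σ (i + 1) ≤ t.getD i 0 := by
  rw [pairwise_zip_labelLE_iff ht] at hcompat
  obtain ⟨j, hj⟩ : ∃ j, σ.length = i + 1 + j := ⟨σ.length - (i + 1), by omega⟩
  induction j generalizing i with
  | zero => simp [dstat_eq_zero (by omega : σ.length ≤ i + 1)]
  | succ j ih =>
    have hnext : dstat σ (i + 1 + 1) ≤ t.getD (i + 1) 0 := ih (by omega) (by omega)
    have hstep := hcompat i (by omega)
    have := dstat_eq_dstat_succ_add σ (i + 1)
    omega

theorem getD_map_range {n j : ℕ} (g : ℕ → ℕ) (h : j < n) :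
    ((List.range n).map g).getD j 0 = g j := by
  simp [List.getD_eq_getElem?_getD, h]

theorem sum_map_range (n : ℕ) (g : ℕ → ℕ) : ((List.range n).map g).sum = ∑ i ∈ range n, g i :=
  rfl

theorem map_range_getD {l : List ℕ} {n : ℕ} (h : l.length = n) :
    (List.range n).map (l.getD · 0) = l := by
  subst h
  refine List.ext_getElem (by simp) fun i _ h₂ => ?_
  simp [List.getElem?_eq_getElem h₂]

theorem sum_range_getD {l : List ℕ} {n : ℕ} (h : l.length = n) :
    ∑ i ∈ range n, l.getD i 0 = l.sum := by
  rw [← sum_map_range, map_range_getD h]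

def addDescents (σ : List ℤ) (u : List ℕ) : List ℕ :=
  (List.range σ.length).map fun i => u.getD i 0 + dstat σ (i + 1)

def subDescents (σ : List ℤ) (t : List ℕ) : List ℕ :=
  (List.range σ.length).map fun i => t.getD i 0 - dstat σ (i + 1)

theorem subDescents_mem_weakPartitions {σ : List ℤ} {M : ℕ} {t : List ℕ}
    (ht : t ∈ compatibleTuples σ (M + maj σ)) : subDescents σ t ∈ weakPartitions σ.length M := by
  obtain ⟨hlen, hsum, hcompat⟩ := mem_compatibleTuples.1 ht
  have hle {i} (hi : i < σ.length) := dstat_le_getD hlen hcompat hi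
  refine mem_weakPartitions.2 ⟨by simp [subDescents], ?_, ?_⟩
  · rw [subDescents, sum_map_range, sum_tsub_distrib _ fun i hi => hle (mem_range.1 hi),
      sum_dstat, sum_range_getD hlen, hsum, Nat.add_sub_cancel]
  · rw [pairwise_zip_labelLE_iff hlen] at hcompat
    refine (pairwise_iff_getD_succ 0).2 fun i hi => ?_
    rw [subDescents, List.length_map, List.length_range] at hi
    rw [subDescents, getD_map_range _ hi, getD_map_range _ (by omega)]
    have hstep := hcompat i hi
    have hnext := hle hi
    have := dstat_eq_dstat_succ_add σ (i + 1)
    omega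

theorem addDescents_mem_compatibleTuples {σ : List ℤ} {M : ℕ} {u : List ℕ}
    (hu : u ∈ weakPartitions σ.length M) : addDescents σ u ∈ compatibleTuples σ (M + maj σ) := by
  obtain ⟨hlen, hsum, hanti⟩ := mem_weakPartitions.1 hu
  have hlen' : (addDescents σ u).length = σ.length := by simp [addDescents]
  refine mem_compatibleTuples.2 ⟨hlen', ?_, (pairwise_zip_labelLE_iff hlen').2 fun i hi => ?_⟩
  · rw [addDescents, sum_map_range, sum_add_distrib, sum_dstat, sum_range_getD hlen, hsum]
  · rw [addDescents, getD_map_range _ hi, getD_map_range _ (by omega)]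
    have hstep := (pairwise_iff_getD_succ 0).1 hanti i (by omega)
    have := dstat_eq_dstat_succ_add σ (i + 1)
    omega

theorem card_compatibleTuples_add_maj (σ : List ℤ) (M : ℕ) :
    #(compatibleTuples σ (M + maj σ)) = #(weakPartitions σ.length M) := by
  refine card_nbij' (subDescents σ) (addDescents σ) (fun _ => subDescents_mem_weakPartitions)
    (fun _ => addDescents_mem_compatibleTuples) (fun t ht => ?_) fun u hu => ?_
  · obtain ⟨hlen, -, hcompat⟩ := mem_compatibleTuples.1 ht
    conv_rhs => rw [← map_range_getD hlen]
    refine List.map_congr_left fun i hi => ?_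
    rw [List.mem_range] at hi
    rw [subDescents, getD_map_range _ hi]
    have := dstat_le_getD hlen hcompat hi
    omega
  · obtain ⟨hlen, -, -⟩ := mem_weakPartitions.1 hu
    conv_rhs => rw [← map_range_getD hlen]
    refine List.map_congr_left fun i hi => ?_
    rw [addDescents, getD_map_range _ (List.mem_range.1 hi), Nat.add_sub_cancel]

theorem compatibleTuples_eq_empty {σ : List ℤ} {M : ℕ} (h : M < maj σ) :
    compatibleTuples σ M = ∅ := by
  refine eq_empty_of_forall_notMem fun t ht => ?_
  obtain ⟨hlen, hsum, hcompat⟩ := mem_compatibleTuples.1 ht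
  have : maj σ ≤ M := by
    rw [← sum_dstat, ← hsum, ← sum_range_getD hlen]
    exact sum_le_sum fun i hi => dstat_le_getD hlen hcompat (mem_range.1 hi)
  omega

noncomputable def compatibleGF (σ : List ℤ) : PowerSeries ℚ :=
  PowerSeries.mk fun M => (#(compatibleTuples σ M) : ℚ)

theorem compatibleGF_eq (σ : List ℤ) :
    compatibleGF σ = PowerSeries.X ^ maj σ * weakPartitionGF σ.length :=
  mk_eq_X_pow_mul_mk (fun M hM => by simp [compatibleTuples_eq_empty hM]) fun M => by
    rw [card_compatibleTuples_add_maj]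

def labelings (L : List ℤ) (M : ℕ) : Finset (List (ℤ × ℕ)) :=
  L.permutations.toFinset.biUnion fun σ => (compatibleTuples σ M).image σ.zip

theorem mem_labelings {L : List ℤ} {M : ℕ} {l : List (ℤ × ℕ)} :
    l ∈ labelings L M ↔
      (l.map Prod.fst).Perm L ∧ (l.map Prod.snd).sum = M ∧ l.Pairwise LabelLE := by
  simp only [labelings, mem_biUnion, mem_image, List.mem_toFinset, List.mem_permutations,
    mem_compatibleTuples]
  constructor
  · rintro ⟨σ, hσ, t, ⟨hlen, rfl, ht⟩, rfl⟩
    rw [List.map_fst_zip (by omega), List.map_snd_zip (by omega)]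
    exact ⟨hσ, rfl, ht⟩
  · rintro ⟨hσ, rfl, hl⟩
    have hzip := List.zip_of_prod (xs := l) rfl rfl
    exact ⟨_, hσ, _, ⟨by simp, rfl, hzip ▸ hl⟩, hzip.symm⟩

theorem card_labelings (L : List ℤ) (M : ℕ) :
    #(labelings L M) = ∑ σ ∈ L.permutations.toFinset, #(compatibleTuples σ M) := by
  rw [labelings, card_biUnion]
  · refine sum_congr rfl fun σ _ => card_image_of_injOn fun t ht t' ht' h => ?_
    have := congrArg (List.map Prod.snd) h
    rwa [List.map_snd_zip (l₁ := σ) (mem_compatibleTuples.1 ht).1.le,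
      List.map_snd_zip (l₁ := σ) (mem_compatibleTuples.1 ht').1.le] at this
  · intro σ _ σ' _ hne
    refine disjoint_left.2 fun l hl hl' => hne ?_
    obtain ⟨t, ht, rfl⟩ := mem_image.1 hl
    obtain ⟨t', ht', h⟩ := mem_image.1 hl'
    have := congrArg (List.map Prod.fst) h
    rwa [List.map_fst_zip (l₂ := t) (mem_compatibleTuples.1 ht).1.ge,
      List.map_fst_zip (l₂ := t') (mem_compatibleTuples.1 ht').1.ge, eq_comm] at this

section Merge

variable {L₁ L₂ : List ℤ} {p : ℤ → Bool}

theorem fst_mem_of_mem_labelings {L : List ℤ} {M : ℕ} {l : List (ℤ × ℕ)}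
    (hl : l ∈ labelings L M) {x : ℤ × ℕ} (hx : x ∈ l) : x.1 ∈ L :=
  (mem_labelings.1 hl).1.subset (List.mem_map_of_mem hx)

theorem mem_labelings_append_comm {M : ℕ} {l : List (ℤ × ℕ)} :
    l ∈ labelings (L₁ ++ L₂) M ↔ l ∈ labelings (L₂ ++ L₁) M := by
  simp only [mem_labelings]
  exact and_congr_left' ⟨(·.trans List.perm_append_comm), (·.trans List.perm_append_comm)⟩

theorem filter_mem_labelings (hp₁ : ∀ x ∈ L₁, p x) (hp₂ : ∀ x ∈ L₂, ¬p x) {M : ℕ}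
    {l : List (ℤ × ℕ)} (hl : l ∈ labelings (L₁ ++ L₂) M) :
    l.filter (p ·.1) ∈ labelings L₁ ((l.filter (p ·.1)).map Prod.snd).sum := by
  obtain ⟨hperm, -, hsorted⟩ := mem_labelings.1 hl
  refine mem_labelings.2 ⟨?_, rfl, hsorted.filter _⟩
  rw [show (l.filter (p ·.1)).map Prod.fst = (l.map Prod.fst).filter p by
    simp [List.filter_map, Function.comp_def]]
  exact filter_perm_of_perm_append p hperm hp₁ hp₂

theorem sort_append_mem_labelings {M₁ M₂ : ℕ} {l₁ l₂ : List (ℤ × ℕ)}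
    (hl₁ : l₁ ∈ labelings L₁ M₁) (hl₂ : l₂ ∈ labelings L₂ M₂) :
    Multiset.sort ↑(l₁ ++ l₂) LabelLE ∈ labelings (L₁ ++ L₂) (M₁ + M₂) := by
  obtain ⟨hperm₁, hsum₁, -⟩ := mem_labelings.1 hl₁
  obtain ⟨hperm₂, hsum₂, -⟩ := mem_labelings.1 hl₂
  have hperm : (Multiset.sort ↑(l₁ ++ l₂) LabelLE).Perm (l₁ ++ l₂) :=
    Multiset.coe_eq_coe.1 (Multiset.sort_eq _ _)
  refine mem_labelings.2 ⟨?_, ?_, Multiset.pairwise_sort _ _⟩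
  · exact (hperm.map _).trans (by rw [List.map_append]; exact hperm₁.append hperm₂)
  · rw [(hperm.map _).sum_eq, List.map_append, List.sum_append, hsum₁, hsum₂]

theorem filter_sort_append (hp₁ : ∀ x ∈ L₁, p x) (hp₂ : ∀ x ∈ L₂, ¬p x) {M₁ M₂ : ℕ}
    {l₁ l₂ : List (ℤ × ℕ)} (hl₁ : l₁ ∈ labelings L₁ M₁) (hl₂ : l₂ ∈ labelings L₂ M₂) :
    (Multiset.sort ↑(l₁ ++ l₂) LabelLE).filter (p ·.1) = l₁ ∧
      (Multiset.sort ↑(l₁ ++ l₂) LabelLE).filter (!p ·.1) = l₂ := by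
  have hperm : (Multiset.sort ↑(l₁ ++ l₂) LabelLE).Perm (l₁ ++ l₂) :=
    Multiset.coe_eq_coe.1 (Multiset.sort_eq _ _)
  have hp₁' (x) (hx : x ∈ l₁) : p x.1 := hp₁ _ (fst_mem_of_mem_labelings hl₁ hx)
  have hp₂' (x) (hx : x ∈ l₂) : ¬p x.1 := hp₂ _ (fst_mem_of_mem_labelings hl₂ hx)
  constructor
  · exact filter_eq_of_perm_append _ (Multiset.pairwise_sort _ _) (mem_labelings.1 hl₁).2.2 hperm
      hp₁' hp₂'
  · exact filter_eq_of_perm_append _ (Multiset.pairwise_sort _ _) (mem_labelings.1 hl₂).2.2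
      (hperm.trans List.perm_append_comm) (by simpa using hp₂') (by simpa using hp₁')

/-- A sorted labeling is determined by its multiset of pairs, so the letters of `L₁` and those of
`L₂` are labeled independently. -/
theorem card_labelings_append (hp₁ : ∀ x ∈ L₁, p x) (hp₂ : ∀ x ∈ L₂, ¬p x) (M : ℕ) :
    #(labelings (L₁ ++ L₂) M)
      = ∑ q ∈ antidiagonal M, #(labelings L₁ q.1) * #(labelings L₂ q.2) := by
  have hp₂' : ∀ x ∈ L₂, (!p x) = true := by simpa using hp₂
  have hp₁' : ∀ x ∈ L₁, ¬(!p x) = true := by simpa using hp₁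
  simp_rw [← card_product]
  rw [← card_sigma]
  refine card_nbij'
    (fun l => ⟨(((l.filter (p ·.1)).map Prod.snd).sum, ((l.filter (!p ·.1)).map Prod.snd).sum),
      (l.filter (p ·.1), l.filter (!p ·.1))⟩)
    (fun x => Multiset.sort ↑(x.2.1 ++ x.2.2) LabelLE) (fun l hl => ?_) (fun x hx => ?_)
    (fun l hl => ?_) fun x hx => ?_
  · obtain ⟨-, hsum, -⟩ := mem_labelings.1 hl
    refine mem_sigma.2 ⟨mem_antidiagonal.2 ?_, mem_product.2 ⟨filter_mem_labelings hp₁ hp₂ hl,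
      filter_mem_labelings hp₂' hp₁' (mem_labelings_append_comm.1 hl)⟩⟩
    rw [← List.sum_append, ← List.map_append, ((List.filter_append_perm _ l).map _).sum_eq, hsum]
  · obtain ⟨hq, hx⟩ := mem_sigma.1 hx
    obtain ⟨hl₁, hl₂⟩ := mem_product.1 hx
    rw [← mem_antidiagonal.1 hq]
    exact sort_append_mem_labelings hl₁ hl₂
  · exact sort_eq_of_perm (mem_labelings.1 hl).2.2 (List.filter_append_perm _ l)
  · obtain ⟨⟨M₁, M₂⟩, l₁, l₂⟩ := x
    obtain ⟨-, hx⟩ := mem_sigma.1 hx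
    obtain ⟨hl₁, hl₂⟩ := mem_product.1 hx
    obtain ⟨e₁, e₂⟩ := filter_sort_append hp₁ hp₂ hl₁ hl₂
    simp only [e₁, e₂, (mem_labelings.1 hl₁).2.1, (mem_labelings.1 hl₂).2.1]

end Merge

noncomputable def wordGF (L : List ℤ) : PowerSeries ℚ :=
  PowerSeries.mk fun M => (#(labelings L M) : ℚ)

theorem wordGF_eq (L : List ℤ) :
    wordGF L = (∑ σ ∈ L.permutations.toFinset, X ^ maj σ : ℚ[X]) * weakPartitionGF L.length := by
  have hsum : wordGF L = ∑ σ ∈ L.permutations.toFinset, compatibleGF σ := by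
    ext M
    simp [wordGF, compatibleGF, card_labelings]
  rw [hsum, ← Polynomial.coeToPowerSeries.ringHom_apply, map_sum, sum_mul]
  refine sum_congr rfl fun σ hσ => ?_
  rw [List.mem_toFinset, List.mem_permutations] at hσ
  simp [compatibleGF_eq, hσ.length_eq]

theorem wordGF_append {L₁ L₂ : List ℤ} (h : L₁.Disjoint L₂) :
    wordGF (L₁ ++ L₂) = wordGF L₁ * wordGF L₂ := by
  ext M
  have hsplit := card_labelings_append (L₁ := L₁) (L₂ := L₂) (p := (· ∈ L₁)) (by simp)
    (fun x hx hx' => h (by simpa using hx') hx) M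
  simp only [wordGF, PowerSeries.coeff_mul, PowerSeries.coeff_mk, hsplit]
  push_cast
  rfl

theorem maj_replicate (a : ℕ) (r : ℤ) : maj (List.replicate a r) = 0 := by
  rw [maj, sum_eq_zero]
  intro i hi
  simp only [descSet, mem_filter, mem_Icc, List.length_replicate] at hi
  rw [List.getD_eq_getElem _ _ (by simp; omega), List.getD_eq_getElem _ _ (by simp; omega)] at hi
  simp at hi

theorem wordGF_replicate (a : ℕ) (r : ℤ) : wordGF (List.replicate a r) = weakPartitionGF a := by
  have hperms : (List.replicate a r).permutations.toFinset = {List.replicate a r} := by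
    ext σ
    simp [List.mem_permutations, List.perm_replicate]
  simp [wordGF_eq, hperms, maj_replicate]

theorem disjoint_flatMap_range_replicate (k : ℕ) (a : ℕ → ℕ) :
    ((List.range k).flatMap fun i => List.replicate (a (i + 1)) ((i : ℤ) + 1)).Disjoint
      (List.replicate (a (k + 1)) ((k : ℤ) + 1)) := by
  intro x hx hx'
  simp only [List.mem_flatMap, List.mem_range, List.mem_replicate] at hx hx'
  omega

theorem length_flatMap_range_replicate (k : ℕ) (a : ℕ → ℕ) :
    ((List.range k).flatMap fun i => List.replicate (a (i + 1)) ((i : ℤ) + 1)).length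
      = ∑ j ∈ Icc 1 k, a j := by
  induction k with
  | zero => simp
  | succ k ih =>
    rw [List.range_succ, List.flatMap_append, List.length_append, ih, sum_Icc_succ_top (by omega)]
    simp

theorem wordGF_flatMap_range_replicate (k : ℕ) (a : ℕ → ℕ) :
    wordGF ((List.range k).flatMap fun i => List.replicate (a (i + 1)) ((i : ℤ) + 1))
      = ∏ j ∈ Icc 1 k, weakPartitionGF (a j) := by
  induction k with
  | zero => simpa [weakPartitionGF_zero] using wordGF_replicate 0 0
  | succ k ih =>
    rw [List.range_succ, List.flatMap_append, List.flatMap_singleton,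
      wordGF_append (disjoint_flatMap_range_replicate k a), ih, wordGF_replicate,
      prod_Icc_succ_top (by omega)]

theorem qFact_ne_zero (m : ℕ) : qFact m ≠ 0 :=
  prod_ne_zero_iff.2 fun i _ h =>
    Nat.cast_add_one_ne_zero (R := ℚ) i (by simpa [eval_finsetSum] using congrArg (eval 1) h)

/-- Clearing the denominators `∏ (1 - X ^ i)` of the partition generating functions. -/
theorem mul_prod_qFact_eq {ι : Type*} (s : Finset ι) (a : ι → ℕ) {n : ℕ}
    (hn : ∑ j ∈ s, a j = n) (S : ℚ[X])
    (h : (S : PowerSeries ℚ) * weakPartitionGF n = ∏ j ∈ s, weakPartitionGF (a j)) :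
    S * ∏ j ∈ s, qFact (a j) = qFact n := by
  set c : ℕ → ℚ[X] := fun m => (1 - X) ^ m * qFact m with hc
  have hprod : (∏ j ∈ s, weakPartitionGF (a j)) * ∏ j ∈ s, (c (a j) : PowerSeries ℚ) = 1 := by
    rw [← prod_mul_distrib]
    exact prod_eq_one fun j _ => weakPartitionGF_mul_eq_one (a j)
  have hcleared : S * ∏ j ∈ s, c (a j) = c n := by
    rw [← Polynomial.coe_inj, Polynomial.coe_mul,
      ← Polynomial.coeToPowerSeries.ringHom_apply (φ := ∏ j ∈ s, c (a j)), map_prod]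
    simp only [Polynomial.coeToPowerSeries.ringHom_apply]
    linear_combination (-(S : PowerSeries ℚ) * ∏ j ∈ s, (c (a j) : PowerSeries ℚ)) *
      weakPartitionGF_mul_eq_one n + ((∏ j ∈ s, (c (a j) : PowerSeries ℚ)) * c n) * h +
      (c n : PowerSeries ℚ) * hprod
  rw [hc, prod_mul_distrib, prod_pow_eq_pow_sum, hn, mul_left_comm] at hcleared
  have h1X : (1 - X : ℚ[X]) ≠ 0 := fun h1X => by simpa using congrArg (eval 0) h1X
  exact mul_left_cancel₀ (pow_ne_zero n h1X) hcleared

end MacMahon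

/-- MacMahon: for the multiset T = {1^{a₁}, 2^{a₂}, ..., k^{a_k}} with a₁ + ... + a_k = n,
the generating function for maj over all words that are permutations of T is the
q-multinomial coefficient [n; a₁,...,a_k]_q. -/
theorem macmahon_maj (n k : ℕ) (a : ℕ → ℕ) (hn : ∑ i ∈ Finset.Icc 1 k, a i = n) :
    ∑ σ ∈ ((List.range k).flatMap
        (fun i => List.replicate (a (i + 1)) ((i : ℤ) + 1))).permutations.toFinset,
        (X : Polynomial ℚ) ^ (maj σ) =
      qFact n / ∏ i ∈ Finset.Icc 1 k, qFact (a i) := by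
  refine EuclideanDomain.eq_div_of_mul_eq_right
    (Finset.prod_ne_zero_iff.2 fun j _ => MacMahon.qFact_ne_zero (a j)) ?_
  rw [mul_comm]
  refine MacMahon.mul_prod_qFact_eq _ a hn _ ?_
  rw [← hn, ← MacMahon.length_flatMap_range_replicate, ← MacMahon.wordGF_eq,
    MacMahon.wordGF_flatMap_range_replicate]
end
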